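/- arXiv:2105.11522 — 6 statements merged into one kernel-verified Lean document; each statement's English description precedes it below -/
import Mathlib

section
/- Under the stated setup, the single-term debiased estimator Ψ_L / p(L) is integrable and E[Ψ_L / p(L)] = a. That is, randomizing the discretization level L according to p and dividing the level-L increment by its selection probability yields an unbiased estimator of the limit a = lim_{l→∞} a_l. -/
/-!
Split `Ω` along the fibers `{L = l}`. On `{L = l}` the estimator is `(p l)⁻¹ • Ψ l`, and since
`L` is independent of `Ψ l` and `P {L = l} = p l`, its integral over that fiber is `E[Ψ l]`, and
likewise the integral of its norm is `E ‖Ψ l‖`. By AM-GM, `E ‖Ψ l‖ ≤ (p l + E ‖Ψ l‖² / p l) / 2`,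
which is summable, so the estimator is integrable and its expectation is `∑ E[Ψ l]`, a telescoping
series with partial sums `a n → A`.
-/

open MeasureTheory ProbabilityTheory Filter

theorem integrable_of_summable_setIntegral_norm_fiber {Ω ι E : Type*} [MeasurableSpace Ω]
    {P : Measure Ω} [Countable ι] [NormedAddCommGroup E] {L : Ω → ι} {g : Ω → E}
    (hg : ∀ i, IntegrableOn g (L ⁻¹' {i}) P)
    (hs : Summable fun i => ∫ ω in L ⁻¹' {i}, ‖g ω‖ ∂P) : Integrable g P := by
  simpa [← Set.preimage_iUnion, Set.iUnion_of_singleton] using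
    integrableOn_iUnion_of_summable_integral_norm hg hs

theorem integral_eq_tsum_setIntegral_fiber {Ω ι E : Type*} [MeasurableSpace Ω] {P : Measure Ω}
    [Countable ι] [MeasurableSpace ι] [MeasurableSingletonClass ι] [NormedAddCommGroup E]
    [NormedSpace ℝ E] {L : Ω → ι} {g : Ω → E} (hL : Measurable L) (hg : Integrable g P) :
    ∫ ω, g ω ∂P = ∑' i, ∫ ω in L ⁻¹' {i}, g ω ∂P := by
  simpa [← Set.preimage_iUnion, Set.iUnion_of_singleton] using
    integral_iUnion (fun i => hL (measurableSet_singleton i)) (pairwise_disjoint_fiber L)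
      hg.integrableOn

theorem ProbabilityTheory.IndepFun.setIntegral_preimage_eq_smul {Ω 𝓧 𝓨 E : Type*}
    [MeasurableSpace Ω] {P : Measure Ω} [MeasurableSpace 𝓧] [MeasurableSpace 𝓨]
    [NormedAddCommGroup E] [NormedSpace ℝ E] {X : Ω → 𝓧} {Y : Ω → 𝓨} {f : 𝓨 → E}
    (hXY : IndepFun X Y P) (hX : Measurable X) (hY : AEMeasurable Y P)
    (hf : AEStronglyMeasurable f (P.map Y)) {S : Set 𝓧} (hS : MeasurableSet S) :
    ∫ ω in X ⁻¹' S, f (Y ω) ∂P = P.real (X ⁻¹' S) • ∫ ω, f (Y ω) ∂P :=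
  ((IndepFun_iff_Indep X Y P).1 hXY).setIntegral_eq_smul hX.comap_le hY ⟨S, hS, rfl⟩ hf

theorem integral_norm_le_half_add_div {Ω E : Type*} [MeasurableSpace Ω] {P : Measure Ω}
    [IsProbabilityMeasure P] [NormedAddCommGroup E] {Y : Ω → E} (hY : MemLp Y 2 P)
    {c : ℝ} (hc : 0 < c) : ∫ ω, ‖Y ω‖ ∂P ≤ (c + (∫ ω, ‖Y ω‖ ^ 2 ∂P) / c) / 2 := by
  have hsq : Integrable (fun ω => ‖Y ω‖ ^ 2) P :=
    (memLp_two_iff_integrable_sq_norm hY.aestronglyMeasurable).mp hY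
  have amgm : ∀ ω, ‖Y ω‖ ≤ (c + ‖Y ω‖ ^ 2 / c) / 2 := fun ω => by
    rw [le_div_iff₀ two_pos, ← sub_nonneg]
    have : (c + ‖Y ω‖ ^ 2 / c) - ‖Y ω‖ * 2 = (‖Y ω‖ - c) ^ 2 / c := by field_simp; ring
    rw [this]
    positivity
  calc ∫ ω, ‖Y ω‖ ∂P ≤ ∫ ω, (c + ‖Y ω‖ ^ 2 / c) / 2 ∂P :=
        integral_mono (hY.integrable one_le_two).norm
          (((integrable_const c).add (hsq.div_const c)).div_const 2) amgm
    _ = (c + (∫ ω, ‖Y ω‖ ^ 2 ∂P) / c) / 2 := by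
        rw [integral_div, integral_add (integrable_const c) (hsq.div_const c), integral_const,
          integral_div]
        simp

theorem tsum_eq_of_increments_tendsto {E : Type*} [NormedAddCommGroup E] {b a : ℕ → E} {A : E}
    (hb : Summable b) (h0 : b 0 = a 0) (hinc : ∀ l, 1 ≤ l → b l = a l - a (l - 1))
    (ha : Tendsto a atTop (nhds A)) : ∑' l, b l = A := by
  have partial_sum : ∀ n, ∑ l ∈ Finset.range (n + 1), b l = a n := by
    intro n
    induction n with
    | zero => simpa using h0
    | succ n ih => simp [Finset.sum_range_succ, ih, hinc (n + 1) (by omega)]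
  refine tendsto_nhds_unique ?_ ha
  simpa only [Function.comp_def, partial_sum] using
    hb.hasSum.tendsto_sum_nat.comp (tendsto_add_atTop_nat 1)

section Estimator

variable {Ω E : Type*} [MeasurableSpace Ω] {P : Measure Ω} [NormedAddCommGroup E]
  [NormedSpace ℝ E] {Ψ : ℕ → Ω → E} {p : ℕ → ℝ} {L : Ω → ℕ} {l : ℕ}

theorem integrableOn_fiber_inv_smul (hL : Measurable L) (hΨ : Integrable (Ψ l) P) :
    IntegrableOn (fun ω => (p (L ω))⁻¹ • Ψ (L ω) ω) (L ⁻¹' {l}) P :=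
  (hΨ.smul (p l)⁻¹).integrableOn.congr_fun (fun ω (hω : L ω = l) => by simp [hω])
    (hL (measurableSet_singleton l))

variable [MeasurableSpace E] [BorelSpace E]

theorem setIntegral_fiber_comp_inv_smul {F : Type*} [NormedAddCommGroup F] [NormedSpace ℝ F]
    {g : E → F} (hg : Continuous g) (hL : Measurable L) (hind : IndepFun L (Ψ l) P)
    (hΨ : AEStronglyMeasurable (Ψ l) P) (hlaw : P.real (L ⁻¹' {l}) = p l) :
    ∫ ω in L ⁻¹' {l}, g ((p (L ω))⁻¹ • Ψ (L ω) ω) ∂P = p l • ∫ ω, g ((p l)⁻¹ • Ψ l ω) ∂P := by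
  rw [setIntegral_congr_fun (hL (measurableSet_singleton l)) fun ω (hω : L ω = l) => by rw [hω],
    hind.setIntegral_preimage_eq_smul (f := fun y => g ((p l)⁻¹ • y)) hL hΨ.aemeasurable
      ((hg.comp (continuous_const_smul _)).comp_aestronglyMeasurable
        hΨ.aestronglyMeasurable_id_map) (measurableSet_singleton l), hlaw]

theorem setIntegral_fiber_inv_smul [CompleteSpace E] (hL : Measurable L)
    (hind : IndepFun L (Ψ l) P) (hΨ : AEStronglyMeasurable (Ψ l) P)
    (hlaw : P.real (L ⁻¹' {l}) = p l) (hp : p l ≠ 0) :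
    ∫ ω in L ⁻¹' {l}, (p (L ω))⁻¹ • Ψ (L ω) ω ∂P = ∫ ω, Ψ l ω ∂P := by
  rw [setIntegral_fiber_comp_inv_smul continuous_id' hL hind hΨ hlaw, integral_smul, smul_smul,
    mul_inv_cancel₀ hp, one_smul]

theorem setIntegral_fiber_norm_inv_smul (hL : Measurable L) (hind : IndepFun L (Ψ l) P)
    (hΨ : AEStronglyMeasurable (Ψ l) P) (hlaw : P.real (L ⁻¹' {l}) = p l) (hp : 0 < p l) :
    ∫ ω in L ⁻¹' {l}, ‖(p (L ω))⁻¹ • Ψ (L ω) ω‖ ∂P = ∫ ω, ‖Ψ l ω‖ ∂P := by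
  simp_rw [setIntegral_fiber_comp_inv_smul continuous_norm hL hind hΨ hlaw, norm_smul,
    integral_const_mul, Real.norm_of_nonneg (inv_nonneg.2 hp.le), smul_eq_mul, ← mul_assoc,
    mul_inv_cancel₀ hp.ne', one_mul]

end Estimator

theorem single_term_estimator_unbiased_general
    {Ω : Type*} [MeasurableSpace Ω] (P : Measure Ω) [IsProbabilityMeasure P]
    (d : ℕ)
    (Ψ : ℕ → Ω → EuclideanSpace ℝ (Fin d))
    (hL2 : ∀ l, MemLp (Ψ l) 2 P)
    (a : ℕ → EuclideanSpace ℝ (Fin d)) (A : EuclideanSpace ℝ (Fin d))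
    (h0 : ∫ ω, Ψ 0 ω ∂P = a 0)
    (hinc : ∀ l, 1 ≤ l → ∫ ω, Ψ l ω ∂P = a l - a (l - 1))
    (hconv : Tendsto a atTop (nhds A))
    (p : ℕ → ℝ) (hp : ∀ l, 0 < p l) (hpsum : ∑' l, p l = 1)
    (hsum : Summable fun l => (∫ ω, ‖Ψ l ω‖ ^ 2 ∂P) / p l)
    (L : Ω → ℕ) (hLmeas : Measurable L)
    (hLlaw : ∀ l, P {ω | L ω = l} = ENNReal.ofReal (p l))
    (hLindep : IndepFun L (fun ω l => Ψ l ω) P) :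
    Integrable (fun ω => (p (L ω))⁻¹ • Ψ (L ω) ω) P ∧
      ∫ ω, (p (L ω))⁻¹ • Ψ (L ω) ω ∂P = A := by
  have hint : ∀ l, Integrable (Ψ l) P := fun l => (hL2 l).integrable one_le_two
  have hind : ∀ l, IndepFun L (Ψ l) P := fun l => hLindep.comp measurable_id (measurable_pi_apply l)
  have hlaw : ∀ l, P.real (L ⁻¹' {l}) = p l := fun l => by
    rw [measureReal_def, show L ⁻¹' {l} = {ω | L ω = l} from rfl, hLlaw,
      ENNReal.toReal_ofReal (hp l).le]
  have hp_summable : Summable p := by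
    by_contra h
    simp [tsum_eq_zero_of_not_summable h] at hpsum
  have hfirst : Summable fun l => ∫ ω, ‖Ψ l ω‖ ∂P :=
    .of_nonneg_of_le (fun l => integral_nonneg fun ω => norm_nonneg _)
      (fun l => integral_norm_le_half_add_div (hL2 l) (hp l)) ((hp_summable.add hsum).div_const 2)
  have hX : Integrable (fun ω => (p (L ω))⁻¹ • Ψ (L ω) ω) P :=
    integrable_of_summable_setIntegral_norm_fiber
      (fun l => integrableOn_fiber_inv_smul hLmeas (hint l))
      (hfirst.congr fun l => (setIntegral_fiber_norm_inv_smul hLmeas (hind l)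
        (hint l).aestronglyMeasurable (hlaw l) (hp l)).symm)
  refine ⟨hX, ?_⟩
  rw [integral_eq_tsum_setIntegral_fiber hLmeas hX]
  simp_rw [setIntegral_fiber_inv_smul hLmeas (hind _) (hint _).aestronglyMeasurable (hlaw _)
    (hp _).ne']
  exact tsum_eq_of_increments_tendsto
    (hfirst.of_norm_bounded fun l => norm_integral_le_integral_norm _) h0 hinc hconv

/-- Unbiasedness of the single-term debiased estimator `Ψ_L / p(L)`:
randomizing the level `L` with pmf `p` yields an integrable estimator whose
expectation equals the limit `A` of the sequence `a_l`. -/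
theorem single_term_estimator_unbiased
    {Ω : Type*} [MeasurableSpace Ω] (P : Measure Ω) [IsProbabilityMeasure P]
    (d : ℕ) (hd : 1 ≤ d)
    (Ψ : ℕ → Ω → EuclideanSpace ℝ (Fin d))
    (hmeas : ∀ l, Measurable (Ψ l))
    (hindep : iIndepFun Ψ P)
    (hL2 : ∀ l, MemLp (Ψ l) 2 P)
    (a : ℕ → EuclideanSpace ℝ (Fin d)) (A : EuclideanSpace ℝ (Fin d))
    (h0 : ∫ ω, Ψ 0 ω ∂P = a 0)
    (hinc : ∀ l, 1 ≤ l → ∫ ω, Ψ l ω ∂P = a l - a (l - 1))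
    (hconv : Tendsto a atTop (nhds A))
    (p : ℕ → ℝ) (hp : ∀ l, 0 < p l) (hpsum : ∑' l, p l = 1)
    (hsum : Summable fun l => (∫ ω, ‖Ψ l ω‖ ^ 2 ∂P) / p l)
    (L : Ω → ℕ) (hLmeas : Measurable L)
    (hLlaw : ∀ l, P {ω | L ω = l} = ENNReal.ofReal (p l))
    (hLindep : IndepFun L (fun ω l => Ψ l ω) P) :
    Integrable (fun ω => (p (L ω))⁻¹ • Ψ (L ω) ω) P ∧
      ∫ ω, (p (L ω))⁻¹ • Ψ (L ω) ω ∂P = A :=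
  single_term_estimator_unbiased_general P d Ψ hL2 a A h0 hinc hconv p hp hpsum hsum L hLmeas hLlaw
    hLindep
end

section
/- Under the stated setup, the single-term debiased estimator has finite second moment given exactly by E[‖Ψ_L / p(L)‖₂²] = Σ_{l≥0} E[‖Ψ_l‖₂²] / p(l) < ∞; in particular the estimator has finite variance. -/
open MeasureTheory ProbabilityTheory Filter
open scoped ENNReal

/-!
Because `L` is independent of the whole family `(Ψ l)`, the joint law of `((Ψ l)_l, L)` is a
product measure, so by Tonelli `E[g(L, Ψ)] = Σ_l P(L = l) E[g(l, Ψ)]` for every nonnegative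
measurable `g`. For `g(l, ψ) = ‖ψ_l / p(l)‖²` the `l`-th term is `p(l) · E‖Ψ_l‖² / p(l)²`;
summability of these terms makes the lower integral finite, so it is the Bochner integral.
-/

section RandomIndex

variable {Ω ι γ : Type*} [MeasurableSpace Ω] [MeasurableSpace ι] [Countable ι]
  [MeasurableSingletonClass ι] [MeasurableSpace γ] {P : Measure Ω} {L : Ω → ι} {Y : Ω → γ}

theorem measurable_comp_index {β : Type*} [MeasurableSpace β] {f : ι → γ → β}
    (hL : Measurable L) (hY : Measurable Y) (hf : ∀ i, Measurable (f i)) :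
    Measurable fun ω => f (L ω) (Y ω) :=
  (measurable_from_prod_countable_left (f := fun z : γ × ι => f z.2 z.1) hf).comp
    (hY.prodMk hL)

theorem lintegral_comp_index_of_indepFun [IsFiniteMeasure P] {f : ι → γ → ℝ≥0∞}
    (hL : Measurable L) (hY : Measurable Y) (hf : ∀ i, Measurable (f i)) (hLY : IndepFun L Y P) :
    ∫⁻ ω, f (L ω) (Y ω) ∂P = ∑' i, P {ω | L ω = i} * ∫⁻ ω, f i (Y ω) ∂P := by
  have hf' : Measurable fun z : γ × ι => f z.2 z.1 := measurable_from_prod_countable_left hf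
  calc ∫⁻ ω, f (L ω) (Y ω) ∂P
      = ∫⁻ z, f z.2 z.1 ∂P.map fun ω => (Y ω, L ω) := (lintegral_map hf' (hY.prodMk hL)).symm
    _ = ∫⁻ z, f z.2 z.1 ∂(P.map Y).prod (P.map L) := by
      rw [(indepFun_iff_map_prod_eq_prod_map_map hY.aemeasurable hL.aemeasurable).1 hLY.symm]
    _ = ∫⁻ i, ∫⁻ y, f i y ∂P.map Y ∂P.map L := lintegral_prod_symm _ hf'.aemeasurable
    _ = ∑' i, P {ω | L ω = i} * ∫⁻ ω, f i (Y ω) ∂P := by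
      rw [lintegral_countable']
      congr with i
      rw [lintegral_map (hf i) hY, Measure.map_apply hL (measurableSet_singleton i), mul_comm]
      rfl

end RandomIndex

theorem lintegral_ofReal_norm_smul_sq {α E : Type*} [MeasurableSpace α] {μ : Measure α}
    [NormedAddCommGroup E] [NormedSpace ℝ E] {X : α → E} (hX : MemLp X 2 μ) (c : ℝ) :
    ∫⁻ x, ENNReal.ofReal (‖c • X x‖ ^ 2) ∂μ = ENNReal.ofReal (c ^ 2 * ∫ x, ‖X x‖ ^ 2 ∂μ) := by
  have hint : Integrable (fun x => c ^ 2 * ‖X x‖ ^ 2) μ :=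
    (hX.integrable_norm_pow two_ne_zero).const_mul _
  rw [← integral_const_mul,
    ofReal_integral_eq_lintegral_ofReal hint (ae_of_all _ fun _ => by positivity)]
  simp only [norm_smul, mul_pow, Real.norm_eq_abs, sq_abs]

theorem integrable_and_integral_eq_of_lintegral_ofReal_eq {α : Type*} [MeasurableSpace α]
    {μ : Measure α} {f : α → ℝ} {c : ℝ} (hf : AEStronglyMeasurable f μ) (hf0 : 0 ≤ᵐ[μ] f)
    (hc : 0 ≤ c) (h : ∫⁻ x, ENNReal.ofReal (f x) ∂μ = ENNReal.ofReal c) :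
    Integrable f μ ∧ ∫ x, f x ∂μ = c := by
  refine ⟨⟨hf, ?_⟩, ?_⟩
  · rw [hasFiniteIntegral_iff_ofReal hf0, h]
    exact ENNReal.ofReal_lt_top
  · rw [integral_eq_lintegral_of_nonneg_ae hf0 hf, h, ENNReal.toReal_ofReal hc]

theorem single_term_estimator_second_moment_general
    {Ω : Type*} [MeasurableSpace Ω] (P : Measure Ω) [IsProbabilityMeasure P]
    (d : ℕ)
    (Ψ : ℕ → Ω → EuclideanSpace ℝ (Fin d))
    (hmeas : ∀ l, Measurable (Ψ l))
    (hL2 : ∀ l, MemLp (Ψ l) 2 P)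
    (p : ℕ → ℝ) (hp : ∀ l, 0 < p l)
    (hsum : Summable fun l => (∫ ω, ‖Ψ l ω‖ ^ 2 ∂P) / p l)
    (L : Ω → ℕ) (hLmeas : Measurable L)
    (hLlaw : ∀ l, P {ω | L ω = l} = ENNReal.ofReal (p l))
    (hLindep : IndepFun L (fun ω l => Ψ l ω) P) :
    Integrable (fun ω => ‖(p (L ω))⁻¹ • Ψ (L ω) ω‖ ^ 2) P ∧
      ∫ ω, ‖(p (L ω))⁻¹ • Ψ (L ω) ω‖ ^ 2 ∂P = ∑' l, (∫ ω, ‖Ψ l ω‖ ^ 2 ∂P) / p l := by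
  have hY : Measurable fun ω l => Ψ l ω := measurable_pi_lambda _ hmeas
  have hterm : ∀ l, 0 ≤ (∫ ω, ‖Ψ l ω‖ ^ 2 ∂P) / p l := fun l =>
    div_nonneg (integral_nonneg fun _ => sq_nonneg _) (hp l).le
  refine integrable_and_integral_eq_of_lintegral_ofReal_eq
    (measurable_comp_index (f := fun l (g : ℕ → EuclideanSpace ℝ (Fin d)) => ‖(p l)⁻¹ • g l‖ ^ 2)
      hLmeas hY fun l => by fun_prop).aestronglyMeasurable
    (ae_of_all _ fun _ => sq_nonneg _) (tsum_nonneg hterm) ?_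
  rw [lintegral_comp_index_of_indepFun
      (f := fun l g => ENNReal.ofReal (‖(p l)⁻¹ • g l‖ ^ 2)) hLmeas hY (fun l => by fun_prop)
      hLindep, ENNReal.ofReal_tsum_of_nonneg hterm hsum]
  congr with l
  rw [hLlaw, lintegral_ofReal_norm_smul_sq (hL2 l), ← ENNReal.ofReal_mul (hp l).le]
  congr 1
  field_simp [(hp l).ne']

/-- The single-term debiased estimator `Ψ_L / p(L)` has finite second moment,
equal to `Σ_l E[‖Ψ_l‖²] / p(l)`; in particular it has finite variance. -/
theorem single_term_estimator_second_moment
    {Ω : Type*} [MeasurableSpace Ω] (P : Measure Ω) [IsProbabilityMeasure P]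
    (d : ℕ) (hd : 1 ≤ d)
    (Ψ : ℕ → Ω → EuclideanSpace ℝ (Fin d))
    (hmeas : ∀ l, Measurable (Ψ l))
    (hindep : iIndepFun Ψ P)
    (hL2 : ∀ l, MemLp (Ψ l) 2 P)
    (a : ℕ → EuclideanSpace ℝ (Fin d)) (A : EuclideanSpace ℝ (Fin d))
    (h0 : ∫ ω, Ψ 0 ω ∂P = a 0)
    (hinc : ∀ l, 1 ≤ l → ∫ ω, Ψ l ω ∂P = a l - a (l - 1))
    (hconv : Tendsto a atTop (nhds A))
    (p : ℕ → ℝ) (hp : ∀ l, 0 < p l) (hpsum : ∑' l, p l = 1)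
    (hsum : Summable fun l => (∫ ω, ‖Ψ l ω‖ ^ 2 ∂P) / p l)
    (L : Ω → ℕ) (hLmeas : Measurable L)
    (hLlaw : ∀ l, P {ω | L ω = l} = ENNReal.ofReal (p l))
    (hLindep : IndepFun L (fun ω l => Ψ l ω) P) :
    Integrable (fun ω => ‖(p (L ω))⁻¹ • Ψ (L ω) ω‖ ^ 2) P ∧
      ∫ ω, ‖(p (L ω))⁻¹ • Ψ (L ω) ω‖ ^ 2 ∂P = ∑' l, (∫ ω, ‖Ψ l ω‖ ^ 2 ∂P) / p l :=
  single_term_estimator_second_moment_general P d Ψ hmeas hL2 p hp hsum L hLmeas hLlaw hLindep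
end

section
/- Under the stated setup, defining the survival function P⋆(l) = Σ_{q≥l} p(q) > 0, the coupled-sum estimator Σ_{l=0}^{L} Ψ_l / P⋆(l) is integrable and E[Σ_{l=0}^{L} Ψ_l / P⋆(l)] = a. That is, the coupled-sum randomized truncation yields an unbiased estimator of the limit a = lim_{l→∞} a_l. -/
open MeasureTheory ProbabilityTheory Filter Finset
open scoped ENNReal

/-!
On the event `{l ≤ L}` the estimator contains the term `Ψ_l / P⋆(l)`, and `P⋆(l) = P(L ≥ l)`.
So it is `∑_l 1{l ≤ L} Ψ_l / P(L ≥ l)`, and since `L` is independent of `Ψ_l` the `l`-th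
term has mean `E Ψ_l` and mean norm `E ‖Ψ_l‖`. Summability of `E ‖Ψ_l‖` lets us exchange
expectation and summation, and the means `E Ψ_l` telescope to `lim a_l = A`.
-/

section Telescoping

variable {G : Type*} [AddCommGroup G] [TopologicalSpace G] [T2Space G]

theorem hasSum_of_telescoping {b a : ℕ → G} {A : G} (hb : Summable b) (h0 : b 0 = a 0)
    (hinc : ∀ l, 1 ≤ l → b l = a l - a (l - 1)) (ha : Tendsto a atTop (nhds A)) :
    HasSum b A := by
  have partial_sum : ∀ n, ∑ l ∈ range (n + 1), b l = a n := by
    intro n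
    induction n with
    | zero => simpa using h0
    | succ n ih =>
      rw [sum_range_succ, ih, hinc (n + 1) (by omega), Nat.add_sub_cancel, add_sub_cancel]
  rw [hb.hasSum_iff_tendsto_nat, ← tendsto_add_atTop_iff_nat 1]
  simpa only [partial_sum] using ha

end Telescoping

section RandomTruncation

variable {Ω E : Type*} {N : Ω → ℕ} {f : ℕ → Ω → E}

theorem sum_range_indicator_le_eq_sum_range_succ [AddCommMonoid E] {n : ℕ} {ω : Ω}
    (hn : N ω < n) :
    ∑ l ∈ range n, {ω | l ≤ N ω}.indicator (f l) ω = ∑ l ∈ range (N ω + 1), f l ω := by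
  calc ∑ l ∈ range n, {ω | l ≤ N ω}.indicator (f l) ω
      = ∑ l ∈ range (N ω + 1), {ω | l ≤ N ω}.indicator (f l) ω :=
        (sum_subset (range_subset_range.2 hn) fun l _ hl =>
          Set.indicator_of_notMem
            (by simp only [mem_range, Set.mem_ofPred_eq] at hl ⊢; omega) _).symm
    _ = ∑ l ∈ range (N ω + 1), f l ω :=
        sum_congr rfl fun l hl =>
          Set.indicator_of_mem (by simp only [mem_range, Set.mem_ofPred_eq] at hl ⊢; omega) _

theorem hasSum_indicator_le [AddCommMonoid E] [TopologicalSpace E] (ω : Ω) :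
    HasSum (fun l => {ω | l ≤ N ω}.indicator (f l) ω) (∑ l ∈ range (N ω + 1), f l ω) := by
  rw [← sum_range_indicator_le_eq_sum_range_succ (Nat.lt_succ_self _)]
  exact hasSum_sum_of_ne_finset_zero fun l hl =>
    Set.indicator_of_notMem (by simp only [mem_range, Set.mem_ofPred_eq] at hl ⊢; omega) _

variable [MeasurableSpace Ω] {μ : Measure Ω} [NormedAddCommGroup E]

theorem integral_norm_indicator_le (hN : Measurable N) (l : ℕ) :
    ∫ ω, ‖{ω | l ≤ N ω}.indicator (f l) ω‖ ∂μ = ∫ ω in {ω | l ≤ N ω}, ‖f l ω‖ ∂μ := by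
  simp_rw [norm_indicator_eq_indicator_norm]
  exact integral_indicator (hN measurableSet_Ici)

variable (hN : Measurable N) (hf : ∀ l, Integrable (f l) μ)
include hN hf

theorem integrable_indicator_le (l : ℕ) : Integrable ({ω | l ≤ N ω}.indicator (f l)) μ :=
  (hf l).indicator (hN measurableSet_Ici)

theorem aestronglyMeasurable_sum_range_succ :
    AEStronglyMeasurable (fun ω => ∑ l ∈ range (N ω + 1), f l ω) μ :=
  aestronglyMeasurable_of_tendsto_ae atTop
    (f := fun n ω => ∑ l ∈ range n, {ω | l ≤ N ω}.indicator (f l) ω)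
    (fun _ => Finset.aestronglyMeasurable_fun_sum _ fun l _ =>
      (integrable_indicator_le hN hf l).aestronglyMeasurable)
    (ae_of_all _ fun ω => tendsto_atTop_of_eventually_const (i₀ := N ω + 1) fun _ hn =>
      sum_range_indicator_le_eq_sum_range_succ hn)

variable (hs : Summable fun l => ∫ ω in {ω | l ≤ N ω}, ‖f l ω‖ ∂μ)
include hs

theorem integrable_sum_range_succ :
    Integrable (fun ω => ∑ l ∈ range (N ω + 1), f l ω) μ := by
  refine ⟨aestronglyMeasurable_sum_range_succ hN hf, ?_⟩
  have bound : ∀ ω, ‖∑ l ∈ range (N ω + 1), f l ω‖ₑ ≤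
      ∑' l, ‖{ω | l ≤ N ω}.indicator (f l) ω‖ₑ := fun ω => by
      rw [← sum_range_indicator_le_eq_sum_range_succ (Nat.lt_succ_self _)]
      exact (enorm_sum_le _ _).trans (ENNReal.sum_le_tsum _)
  calc ∫⁻ ω, ‖∑ l ∈ range (N ω + 1), f l ω‖ₑ ∂μ
      ≤ ∫⁻ ω, ∑' l, ‖{ω | l ≤ N ω}.indicator (f l) ω‖ₑ ∂μ := lintegral_mono bound
    _ = ∑' l, ENNReal.ofReal (∫ ω in {ω | l ≤ N ω}, ‖f l ω‖ ∂μ) := by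
        rw [lintegral_tsum fun l => (integrable_indicator_le hN hf l).aestronglyMeasurable.enorm]
        congr 1 with l
        rw [← integral_norm_indicator_le hN,
          ofReal_integral_norm_eq_lintegral_enorm (integrable_indicator_le hN hf l)]
    _ = ENNReal.ofReal (∑' l, ∫ ω in {ω | l ≤ N ω}, ‖f l ω‖ ∂μ) :=
        (ENNReal.ofReal_tsum_of_nonneg (fun _ => integral_nonneg fun _ => norm_nonneg _) hs).symm
    _ < ⊤ := ENNReal.ofReal_lt_top

theorem hasSum_setIntegral_le_integral_sum_range_succ [NormedSpace ℝ E] :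
    HasSum (fun l => ∫ ω in {ω | l ≤ N ω}, f l ω ∂μ)
      (∫ ω, ∑ l ∈ range (N ω + 1), f l ω ∂μ) := by
  have h := hasSum_integral_of_summable_integral_norm (integrable_indicator_le hN hf)
    (by simpa only [integral_norm_indicator_le hN] using hs)
  have hset : ∀ l, ∫ ω, {ω | l ≤ N ω}.indicator (f l) ω ∂μ = ∫ ω in {ω | l ≤ N ω}, f l ω ∂μ :=
    fun l => integral_indicator (hN measurableSet_Ici)
  simpa only [hset, (hasSum_indicator_le _).tsum_eq] using h

end RandomTruncation

section CoupledSum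

variable {Ω E : Type*} [MeasurableSpace Ω] {μ : Measure Ω} [NormedAddCommGroup E]
  [NormedSpace ℝ E] [MeasurableSpace E] [BorelSpace E]

theorem ProbabilityTheory.IndepFun.setIntegral_preimage {α : Type*} [MeasurableSpace α]
    {X : Ω → α} {Y : Ω → E} (hXY : IndepFun X Y μ) (hX : Measurable X)
    (hY : AEStronglyMeasurable Y μ) {s : Set α} (hs : MeasurableSet s) :
    ∫ ω in X ⁻¹' s, Y ω ∂μ = μ.real (X ⁻¹' s) • ∫ ω, Y ω ∂μ := by
  have h1s : Measurable (s.indicator (1 : α → ℝ)) := measurable_one.indicator hs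
  calc ∫ ω in X ⁻¹' s, Y ω ∂μ = ∫ ω, s.indicator 1 (X ω) • Y ω ∂μ := by
        rw [← integral_indicator (hX hs)]
        congr with ω
        by_cases h : X ω ∈ s <;> simp [h]
    _ = (∫ ω, s.indicator 1 (X ω) ∂μ) • ∫ ω, Y ω ∂μ :=
        (hXY.comp h1s measurable_id).integral_fun_smul_eq_smul_integral
          (h1s.comp hX).aestronglyMeasurable hY
    _ = μ.real (X ⁻¹' s) • ∫ ω, Y ω ∂μ := by
        rw [← integral_indicator_one (hX hs)]
        rfl

variable {N : Ω → ℕ}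

theorem setIntegral_inv_measureReal_smul_eq_integral {Z : Ω → E} (hN : Measurable N)
    (hZ : IndepFun N Z μ) (hZm : AEStronglyMeasurable Z μ) {l : ℕ}
    (hpos : 0 < μ.real {ω | l ≤ N ω}) :
    ∫ ω in {ω | l ≤ N ω}, (μ.real {ω | l ≤ N ω})⁻¹ • Z ω ∂μ = ∫ ω, Z ω ∂μ := by
  change 0 < μ.real (N ⁻¹' Set.Ici l) at hpos
  change ∫ ω in N ⁻¹' Set.Ici l, (μ.real (N ⁻¹' Set.Ici l))⁻¹ • Z ω ∂μ = _
  rw [integral_smul, hZ.setIntegral_preimage hN hZm measurableSet_Ici, smul_smul,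
    inv_mul_cancel₀ hpos.ne', one_smul]

theorem integrable_and_hasSum_integral_coupledSum {Y : ℕ → Ω → E} (hN : Measurable N)
    (hY : ∀ l, Integrable (Y l) μ) (hindep : ∀ l, IndepFun N (Y l) μ)
    (hpos : ∀ l, 0 < μ.real {ω | l ≤ N ω}) (hsum : Summable fun l => ∫ ω, ‖Y l ω‖ ∂μ) :
    Integrable (fun ω => ∑ l ∈ range (N ω + 1), (μ.real {ω | l ≤ N ω})⁻¹ • Y l ω) μ ∧
      HasSum (fun l => ∫ ω, Y l ω ∂μ)
        (∫ ω, ∑ l ∈ range (N ω + 1), (μ.real {ω | l ≤ N ω})⁻¹ • Y l ω ∂μ) := by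
  have hf : ∀ l, Integrable (fun ω => (μ.real {ω | l ≤ N ω})⁻¹ • Y l ω) μ :=
    fun l => (hY l).smul _
  have hnorm : ∀ l, ∫ ω in {ω | l ≤ N ω}, ‖(μ.real {ω | l ≤ N ω})⁻¹ • Y l ω‖ ∂μ
      = ∫ ω, ‖Y l ω‖ ∂μ := fun l => by
    simp_rw [norm_smul, norm_inv, Real.norm_of_nonneg (hpos l).le, ← smul_eq_mul]
    exact setIntegral_inv_measureReal_smul_eq_integral hN
      ((hindep l).comp measurable_id measurable_norm) (hY l).norm.aestronglyMeasurable (hpos l)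
  have hs : Summable fun l => ∫ ω in {ω | l ≤ N ω}, ‖(μ.real {ω | l ≤ N ω})⁻¹ • Y l ω‖ ∂μ := by
    simpa only [hnorm] using hsum
  refine ⟨integrable_sum_range_succ hN hf hs, ?_⟩
  convert hasSum_setIntegral_le_integral_sum_range_succ hN hf hs using 2 with l
  exact (setIntegral_inv_measureReal_smul_eq_integral hN (hindep l)
    (hY l).aestronglyMeasurable (hpos l)).symm

end CoupledSum

theorem measure_le_eq_ofReal_tsum {Ω : Type*} [MeasurableSpace Ω] {μ : Measure Ω}
    {L : Ω → ℕ} (hL : Measurable L) {p : ℕ → ℝ} (hp : ∀ q, 0 ≤ p q) (hps : Summable p)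
    (hlaw : ∀ q, μ {ω | L ω = q} = ENNReal.ofReal (p q)) (l : ℕ) :
    μ {ω | l ≤ L ω} = ENNReal.ofReal (∑' q, if l ≤ q then p q else 0) := by
  have hite : (fun q => if l ≤ q then p q else 0) = (Set.Ici l).indicator p := by
    ext q
    simp [Set.indicator_apply]
  calc μ {ω | l ≤ L ω} = ∑' q : Set.Ici l, μ (L ⁻¹' {(q : ℕ)}) :=
        (tsum_measure_preimage_singleton (Set.to_countable _)
          fun q _ => hL (measurableSet_singleton q)).symm
    _ = ∑' q : Set.Ici l, ENNReal.ofReal (p q) := tsum_congr fun q => hlaw q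
    _ = ENNReal.ofReal (∑' q, if l ≤ q then p q else 0) := by
        rw [← ENNReal.ofReal_tsum_of_nonneg (f := fun q : Set.Ici l => p q) (fun q => hp q)
          (hps.subtype _), hite, _root_.tsum_subtype]

theorem coupled_sum_estimator_unbiased_general
    {Ω : Type*} [MeasurableSpace Ω] (P : Measure Ω) [IsProbabilityMeasure P]
    (d : ℕ)
    (Ψ : ℕ → Ω → EuclideanSpace ℝ (Fin d))
    (hL2 : ∀ l, MemLp (Ψ l) 2 P)
    (a : ℕ → EuclideanSpace ℝ (Fin d)) (A : EuclideanSpace ℝ (Fin d))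
    (h0 : ∫ ω, Ψ 0 ω ∂P = a 0)
    (hinc : ∀ l, 1 ≤ l → ∫ ω, Ψ l ω ∂P = a l - a (l - 1))
    (hconv : Tendsto a atTop (nhds A))
    (p : ℕ → ℝ) (hp : ∀ l, 0 < p l) (hpsum : ∑' l, p l = 1)
    (hsum : Summable fun l => ∫ ω, ‖Ψ l ω‖ ∂P)
    (L : Ω → ℕ) (hLmeas : Measurable L)
    (hLlaw : ∀ l, P {ω | L ω = l} = ENNReal.ofReal (p l))
    (hLindep : IndepFun L (fun ω l => Ψ l ω) P)
    (Pstar : ℕ → ℝ) (hPstar : ∀ l, Pstar l = ∑' q : ℕ, if l ≤ q then p q else 0) :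
    (∀ l, 0 < Pstar l) ∧
      Integrable (fun ω => ∑ l ∈ Finset.range (L ω + 1), (Pstar l)⁻¹ • Ψ l ω) P ∧
      ∫ ω, ∑ l ∈ Finset.range (L ω + 1), (Pstar l)⁻¹ • Ψ l ω ∂P = A := by
  have hps : Summable p := by
    by_contra h
    simp [tsum_eq_zero_of_not_summable h] at hpsum
  have hPstar_eq : Pstar = fun l => P.real {ω | l ≤ L ω} := by
    ext l
    rw [hPstar, measureReal_def, measure_le_eq_ofReal_tsum hLmeas (fun q => (hp q).le) hps hLlaw,
      ENNReal.toReal_ofReal (tsum_nonneg fun q => by split_ifs <;> simp [(hp q).le])]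
  subst hPstar_eq
  have hpos : ∀ l, 0 < P.real {ω | l ≤ L ω} := fun l =>
    calc 0 < p l := hp l
      _ = P.real {ω | L ω = l} := by rw [measureReal_def, hLlaw, ENNReal.toReal_ofReal (hp l).le]
      _ ≤ P.real {ω | l ≤ L ω} := measureReal_mono fun ω (h : L ω = l) => h.ge
  obtain ⟨hint, hmean⟩ := integrable_and_hasSum_integral_coupledSum hLmeas
    (fun l => (hL2 l).integrable one_le_two)
    (fun l => hLindep.comp measurable_id (measurable_pi_apply l)) hpos hsum
  have htel := hasSum_of_telescoping
    (hsum.of_norm_bounded fun l => norm_integral_le_integral_norm _) h0 hinc hconv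
  exact ⟨hpos, hint, hmean.unique htel⟩

/-- Unbiasedness of the coupled-sum debiased estimator `Σ_{l=0}^L Ψ_l / P⋆(l)`,
where `P⋆(l) = Σ_{q ≥ l} p(q)` is the survival function of the level
distribution: the estimator is integrable with expectation the limit `A`. -/
theorem coupled_sum_estimator_unbiased
    {Ω : Type*} [MeasurableSpace Ω] (P : Measure Ω) [IsProbabilityMeasure P]
    (d : ℕ) (hd : 1 ≤ d)
    (Ψ : ℕ → Ω → EuclideanSpace ℝ (Fin d))
    (hmeas : ∀ l, Measurable (Ψ l))
    (hindep : iIndepFun Ψ P)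
    (hL2 : ∀ l, MemLp (Ψ l) 2 P)
    (a : ℕ → EuclideanSpace ℝ (Fin d)) (A : EuclideanSpace ℝ (Fin d))
    (h0 : ∫ ω, Ψ 0 ω ∂P = a 0)
    (hinc : ∀ l, 1 ≤ l → ∫ ω, Ψ l ω ∂P = a l - a (l - 1))
    (hconv : Tendsto a atTop (nhds A))
    (p : ℕ → ℝ) (hp : ∀ l, 0 < p l) (hpsum : ∑' l, p l = 1)
    (hsum : Summable fun l => ∫ ω, ‖Ψ l ω‖ ∂P)
    (L : Ω → ℕ) (hLmeas : Measurable L)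
    (hLlaw : ∀ l, P {ω | L ω = l} = ENNReal.ofReal (p l))
    (hLindep : IndepFun L (fun ω l => Ψ l ω) P)
    (Pstar : ℕ → ℝ) (hPstar : ∀ l, Pstar l = ∑' q : ℕ, if l ≤ q then p q else 0) :
    (∀ l, 0 < Pstar l) ∧
      Integrable (fun ω => ∑ l ∈ Finset.range (L ω + 1), (Pstar l)⁻¹ • Ψ l ω) P ∧
      ∫ ω, ∑ l ∈ Finset.range (L ω + 1), (Pstar l)⁻¹ • Ψ l ω ∂P = A :=
  coupled_sum_estimator_unbiased_general P d Ψ hL2 a A h0 hinc hconv p hp hpsum hsum L hLmeas hLlaw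
    hLindep Pstar hPstar
end

section
/- Under the stated coupled-chain assumptions, for any k⋆ ≥ 1 the Rhee–Glynn estimator H = φ(X_{k⋆}) + Σ_{k=k⋆+1}^{τ−1} (φ(X_k) − φ(X̊_k)) (the sum taken to be zero when τ − 1 ≤ k⋆) is integrable and E[H] = π(φ). That is, the coupled-chain estimator is an unbiased estimator of the stationary expectation π(φ). -/
/-!
Write `D_k = φ(X_k) − φ(X̊_k)`. By faithfulness `D_k = 0` for `k ≥ τ`, so the estimator is almost
surely `φ(X_{k⋆}) + Σ_{k > k⋆} D_k`, and `|D_k| ≤ 2‖φ‖_∞ 𝟙{k < τ}`. The geometric tails give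
`Σ_k P(τ > k) < ∞`, so the series converges in `L¹` and may be integrated termwise. Since `X̊_k` has
the law of `X_{k−1}`, `E[D_k] = E[φ(X_k)] − E[φ(X_{k−1})]`, and the telescoping series of
expectations sums to `π(φ) − E[φ(X_{k⋆})]`.
-/

open MeasureTheory ProbabilityTheory Filter Topology
open scoped ENNReal

lemma Finset.sum_Ico_eq_tsum_of_eq_zero {G : Type*} [AddCommMonoid G] [TopologicalSpace G]
    {d : ℕ → G} {m n : ℕ} (h : ∀ k, n ≤ k → d k = 0) :
    ∑ k ∈ Finset.Ico m n, d k = ∑' k, d (m + k) := by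
  rw [tsum_eq_sum (s := Finset.range (n - m)) fun k hk => h _ ?_, Finset.sum_Ico_eq_sum_range]
  rw [Finset.mem_range, not_lt] at hk
  omega

lemma HasSum.eq_sub_of_tendsto {G : Type*} [AddCommGroup G] [TopologicalSpace G]
    [IsTopologicalAddGroup G] [T2Space G] {e : ℕ → G} {s L : G}
    (hs : HasSum (fun k => e (k + 1) - e k) s) (he : Tendsto e atTop (𝓝 L)) : s = L - e 0 := by
  refine tendsto_nhds_unique hs.tendsto_sum_nat ?_
  simp_rw [Finset.sum_range_sub]
  exact he.sub_const _

namespace MeasureTheory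

variable {α : Type*} [MeasurableSpace α] {μ : Measure α}

lemma lintegral_enorm_le_mul_measure_of_ae_eq_zero {E : Type*} [NormedAddCommGroup E]
    {f : α → E} {M : ℝ} {s : Set α} (hM : ∀ a, ‖f a‖ ≤ M) (hs : ∀ᵐ a ∂μ, a ∉ s → f a = 0) :
    ∫⁻ a, ‖f a‖ₑ ∂μ ≤ ENNReal.ofReal M * μ s :=
  calc ∫⁻ a, ‖f a‖ₑ ∂μ ≤ ∫⁻ a, s.indicator (fun _ => ENNReal.ofReal M) a ∂μ := by
        refine lintegral_mono_ae (hs.mono fun a ha => ?_)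
        by_cases has : a ∈ s
        · rw [Set.indicator_of_mem has, ← ofReal_norm]
          exact ENNReal.ofReal_le_ofReal (hM a)
        · simp [Set.indicator_of_notMem has, ha has]
    _ ≤ ENNReal.ofReal M * μ s := lintegral_indicator_const_le s _

lemma tsum_measure_lt_ne_top_of_le_geometric {τ : α → ℕ} {C ρ : ℝ} (hρ₀ : 0 ≤ ρ) (hρ₁ : ρ < 1)
    (htail : ∀ k, μ {a | k < τ a} ≤ ENNReal.ofReal (C * ρ ^ k)) :
    ∑' k, μ {a | k < τ a} ≠ ∞ := by
  have hgeom k : ENNReal.ofReal (C * ρ ^ k) = ENNReal.ofReal C * ENNReal.ofReal ρ ^ k := by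
    rw [ENNReal.ofReal_mul' (pow_nonneg hρ₀ k), ENNReal.ofReal_pow hρ₀]
  refine ne_top_of_le_ne_top ?_ (ENNReal.tsum_le_tsum fun k => (htail k).trans_eq (hgeom k))
  rw [ENNReal.tsum_mul_left]
  exact ENNReal.mul_ne_top ENNReal.ofReal_ne_top
    (tsum_geometric_lt_top.2 (ENNReal.ofReal_lt_one.2 hρ₁)).ne

variable {E : Type*} [NormedAddCommGroup E] {ι : Type*} [Countable ι]
  {f : ι → α → E}

lemma ae_summable_of_tsum_lintegral_enorm_ne_top [CompleteSpace E] (hf : ∀ i, AEStronglyMeasurable (f i) μ)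
    (h : ∑' i, ∫⁻ a, ‖f i a‖ₑ ∂μ ≠ ∞) : ∀ᵐ a ∂μ, Summable fun i => f i a := by
  have hf' i : AEMeasurable (fun a => ‖f i a‖ₑ) μ := (hf i).enorm
  rw [← lintegral_tsum hf'] at h
  filter_upwards [ae_lt_top' (AEMeasurable.tsum hf') h] with a ha
  exact Summable.of_enorm ha.ne

lemma integrable_tsum_of_tsum_lintegral_enorm_ne_top [CompleteSpace E] (hf : ∀ i, AEStronglyMeasurable (f i) μ)
    (h : ∑' i, ∫⁻ a, ‖f i a‖ₑ ∂μ ≠ ∞) : Integrable (fun a => ∑' i, f i a) μ := by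
  refine ⟨aestronglyMeasurable_of_tendsto_ae atTop
    (fun s => Finset.aestronglyMeasurable_fun_sum s fun i _ => hf i) ?_, ?_⟩
  · filter_upwards [ae_summable_of_tsum_lintegral_enorm_ne_top hf h] with a ha
    exact ha.hasSum
  · calc ∫⁻ a, ‖∑' i, f i a‖ₑ ∂μ ≤ ∫⁻ a, ∑' i, ‖f i a‖ₑ ∂μ :=
          lintegral_mono fun a => enorm_tsum_le_tsum_enorm
      _ = ∑' i, ∫⁻ a, ‖f i a‖ₑ ∂μ := lintegral_tsum fun i => (hf i).enorm
      _ < ∞ := h.lt_top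

lemma hasSum_integral_of_tsum_lintegral_enorm_ne_top [NormedSpace ℝ E]
    (hf : ∀ i, AEStronglyMeasurable (f i) μ) (h : ∑' i, ∫⁻ a, ‖f i a‖ₑ ∂μ ≠ ∞) :
    HasSum (fun i => ∫ a, f i a ∂μ) (∫ a, ∑' i, f i a ∂μ) := by
  have hint i : Integrable (f i) μ := ⟨hf i, (ENNReal.le_tsum i).trans_lt h.lt_top⟩
  refine hasSum_integral_of_summable_integral_norm hint ?_
  simp_rw [integral_norm_eq_lintegral_enorm (hf _)]
  exact ENNReal.summable_toReal h

end MeasureTheory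

section RheeGlynn

variable {Ω : Type*} [MeasurableSpace Ω] {P : Measure Ω} {Y Y' : ℕ → Ω → ℝ} {τ : Ω → ℕ} {M : ℝ}

def rheeGlynnEstimator (Y Y' : ℕ → Ω → ℝ) (τ : Ω → ℕ) (a : ℕ) (ω : Ω) : ℝ :=
  Y a ω + ∑ k ∈ Finset.Ico (a + 1) (τ ω), (Y k ω - Y' k ω)

lemma rheeGlynnEstimator_ae_eq_tsum (hfaith : ∀ᵐ ω ∂P, ∀ k, τ ω ≤ k → Y k ω = Y' k ω) (a : ℕ) :
    rheeGlynnEstimator Y Y' τ a =ᵐ[P]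
      fun ω => Y a ω + ∑' k, (Y (a + 1 + k) ω - Y' (a + 1 + k) ω) := by
  filter_upwards [hfaith] with ω hω
  rw [rheeGlynnEstimator, Finset.sum_Ico_eq_tsum_of_eq_zero fun k hk => sub_eq_zero.2 (hω k hk)]

lemma tsum_lintegral_enorm_sub_ne_top (hY : ∀ k ω, ‖Y k ω‖ ≤ M) (hY' : ∀ k ω, ‖Y' k ω‖ ≤ M)
    (hfaith : ∀ᵐ ω ∂P, ∀ k, τ ω ≤ k → Y k ω = Y' k ω) (hτ : ∑' k, P {ω | k < τ ω} ≠ ∞)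
    (a : ℕ) : ∑' k, ∫⁻ ω, ‖Y (a + k) ω - Y' (a + k) ω‖ₑ ∂P ≠ ∞ := by
  have hle k : ∫⁻ ω, ‖Y k ω - Y' k ω‖ₑ ∂P ≤ ENNReal.ofReal (2 * M) * P {ω | k < τ ω} :=
    lintegral_enorm_le_mul_measure_of_ae_eq_zero
      (fun ω => (norm_sub_le _ _).trans (by linarith [hY k ω, hY' k ω]))
      (hfaith.mono fun ω hω hk => sub_eq_zero.2 (hω k (not_lt.1 hk)))
  have hsum : ∑' k, ∫⁻ ω, ‖Y k ω - Y' k ω‖ₑ ∂P ≠ ∞ := by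
    refine ne_top_of_le_ne_top ?_ (ENNReal.tsum_le_tsum hle)
    rw [ENNReal.tsum_mul_left]
    exact ENNReal.mul_ne_top ENNReal.ofReal_ne_top hτ
  exact ne_top_of_le_ne_top hsum
    (ENNReal.tsum_comp_le_tsum_of_injective (add_right_injective a) _)

variable [IsFiniteMeasure P] (hYm : ∀ k, AEStronglyMeasurable (Y k) P)
  (hY'm : ∀ k, AEStronglyMeasurable (Y' k) P) (hY : ∀ k ω, ‖Y k ω‖ ≤ M)
  (hY' : ∀ k ω, ‖Y' k ω‖ ≤ M) (hfaith : ∀ᵐ ω ∂P, ∀ k, τ ω ≤ k → Y k ω = Y' k ω)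
  (hτ : ∑' k, P {ω | k < τ ω} ≠ ∞)
include hYm hY'm hY hY' hfaith hτ

lemma integrable_rheeGlynnEstimator (a : ℕ) : Integrable (rheeGlynnEstimator Y Y' τ a) P := by
  have hseries := integrable_tsum_of_tsum_lintegral_enorm_ne_top
    (fun k => (hYm (a + 1 + k)).sub (hY'm _)) (tsum_lintegral_enorm_sub_ne_top hY hY' hfaith hτ _)
  exact ((Integrable.of_bound (hYm a) M (ae_of_all _ (hY a))).add hseries).congr
    (rheeGlynnEstimator_ae_eq_tsum hfaith a).symm

lemma integral_rheeGlynnEstimator (hshift : ∀ k, ∫ ω, Y' (k + 1) ω ∂P = ∫ ω, Y k ω ∂P) {L : ℝ}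
    (hconv : Tendsto (fun k => ∫ ω, Y k ω ∂P) atTop (𝓝 L)) (a : ℕ) :
    ∫ ω, rheeGlynnEstimator Y Y' τ a ω ∂P = L := by
  have hint k : Integrable (Y k) P := .of_bound (hYm k) M (ae_of_all _ (hY k))
  have hint' k : Integrable (Y' k) P := .of_bound (hY'm k) M (ae_of_all _ (hY' k))
  have hmeas k : AEStronglyMeasurable (fun ω => Y (a + 1 + k) ω - Y' (a + 1 + k) ω) P :=
    (hYm (a + 1 + k)).sub (hY'm (a + 1 + k))
  have hfin := tsum_lintegral_enorm_sub_ne_top hY hY' hfaith hτ (a + 1)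
  have hincr k : ∫ ω, (Y (a + 1 + k) ω - Y' (a + 1 + k) ω) ∂P
      = ∫ ω, Y (a + (k + 1)) ω ∂P - ∫ ω, Y (a + k) ω ∂P := by
    rw [integral_sub (hint _) (hint' _), show a + 1 + k = a + k + 1 by omega, hshift]
    rfl
  have hseries := hasSum_integral_of_tsum_lintegral_enorm_ne_top hmeas hfin
  simp_rw [hincr] at hseries
  have hsum := hseries.eq_sub_of_tendsto (e := fun n => ∫ ω, Y (a + n) ω ∂P)
    (hconv.comp (tendsto_atTop_mono (Nat.le_add_left · a) tendsto_id))
  rw [integral_congr_ae (rheeGlynnEstimator_ae_eq_tsum hfaith a),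
    integral_add (hint a) (integrable_tsum_of_tsum_lintegral_enorm_ne_top hmeas hfin), hsum]
  exact add_sub_cancel (∫ ω, Y a ω ∂P) L

end RheeGlynn

theorem rhee_glynn_estimator_unbiased_general
    {Ω : Type*} [MeasurableSpace Ω] (P : Measure Ω) [IsProbabilityMeasure P]
    {S : Type*} [MeasurableSpace S]
    (π : Measure S)
    (φ : S → ℝ) (hφm : Measurable φ) (hφb : ∃ C, ∀ s, |φ s| ≤ C)
    (X X' : ℕ → Ω → S)
    (hXm : ∀ k, Measurable (X k)) (hX'm : ∀ k, Measurable (X' k))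
    (hident : ∀ k, 1 ≤ k → IdentDistrib (X' k) (X (k - 1)) P P)
    (hconv : Tendsto (fun k => ∫ ω, φ (X k ω) ∂P) atTop (nhds (∫ s, φ s ∂π)))
    (τ : Ω → ℕ)
    (C ρ : ℝ) (hρ : ρ ∈ Set.Ioo (0 : ℝ) 1)
    (htail : ∀ k, P {ω | k < τ ω} ≤ ENNReal.ofReal (C * ρ ^ k))
    (hfaithful : ∀ᵐ ω ∂P, ∀ k, τ ω ≤ k → X k ω = X' k ω)
    (kstar : ℕ) :
    Integrable (fun ω => φ (X kstar ω) +
        ∑ k ∈ Finset.Ico (kstar + 1) (τ ω), (φ (X k ω) - φ (X' k ω))) P ∧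
      ∫ ω, (φ (X kstar ω) +
        ∑ k ∈ Finset.Ico (kstar + 1) (τ ω), (φ (X k ω) - φ (X' k ω))) ∂P =
        ∫ s, φ s ∂π := by
  obtain ⟨M, hM⟩ := hφb
  have hYm k := (hφm.comp (hXm k)).aestronglyMeasurable (μ := P)
  have hY'm k := (hφm.comp (hX'm k)).aestronglyMeasurable (μ := P)
  have hfaith : ∀ᵐ ω ∂P, ∀ k, τ ω ≤ k → φ (X k ω) = φ (X' k ω) :=
    hfaithful.mono fun ω h k hk => by rw [h k hk]
  have hτ := tsum_measure_lt_ne_top_of_le_geometric hρ.1.le hρ.2 htail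
  have hshift k : ∫ ω, φ (X' (k + 1) ω) ∂P = ∫ ω, φ (X k ω) ∂P :=
    ((hident (k + 1) (Nat.le_add_left 1 k)).comp hφm).integral_eq
  exact ⟨integrable_rheeGlynnEstimator hYm hY'm (fun _ _ => hM _) (fun _ _ => hM _) hfaith hτ kstar,
    integral_rheeGlynnEstimator hYm hY'm (fun _ _ => hM _) (fun _ _ => hM _) hfaith hτ hshift
      hconv kstar⟩

/-- Unbiasedness of the Rhee–Glynn coupled-chain estimator
`H = φ(X_{k⋆}) + Σ_{k=k⋆+1}^{τ−1} (φ(X_k) − φ(X̊_k))`: under the coupled-chain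
assumptions (shifted identical distribution, convergence of expectations to
`π(φ)`, geometric tails of the meeting time, faithfulness after meeting),
`H` is integrable with expectation `π(φ)`. -/
theorem rhee_glynn_estimator_unbiased
    {Ω : Type*} [MeasurableSpace Ω] (P : Measure Ω) [IsProbabilityMeasure P]
    {S : Type*} [MeasurableSpace S]
    (π : Measure S) [IsProbabilityMeasure π]
    (φ : S → ℝ) (hφm : Measurable φ) (hφb : ∃ C, ∀ s, |φ s| ≤ C)
    (X X' : ℕ → Ω → S)
    (hXm : ∀ k, Measurable (X k)) (hX'm : ∀ k, Measurable (X' k))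
    (hident : ∀ k, 1 ≤ k → IdentDistrib (X' k) (X (k - 1)) P P)
    (hconv : Tendsto (fun k => ∫ ω, φ (X k ω) ∂P) atTop (nhds (∫ s, φ s ∂π)))
    (τ : Ω → ℕ) (hτ : ∀ ω, τ ω = sInf {k | 1 ≤ k ∧ X k ω = X' k ω})
    (C ρ : ℝ) (hρ : ρ ∈ Set.Ioo (0 : ℝ) 1)
    (htail : ∀ k, P {ω | k < τ ω} ≤ ENNReal.ofReal (C * ρ ^ k))
    (hfaithful : ∀ᵐ ω ∂P, ∀ k, τ ω ≤ k → X k ω = X' k ω)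
    (kstar : ℕ) (hk : 1 ≤ kstar) :
    Integrable (fun ω => φ (X kstar ω) +
        ∑ k ∈ Finset.Ico (kstar + 1) (τ ω), (φ (X k ω) - φ (X' k ω))) P ∧
      ∫ ω, (φ (X kstar ω) +
        ∑ k ∈ Finset.Ico (kstar + 1) (τ ω), (φ (X k ω) - φ (X' k ω))) ∂P =
        ∫ s, φ s ∂π :=
  rhee_glynn_estimator_unbiased_general P π φ hφm hφb X X' hXm hX'm hident hconv τ C ρ hρ htail
    hfaithful kstar
end

section
/- Under the stated coupled-chain assumptions, for any integers 1 ≤ k⋆ < m⋆ the time-averaged Rhee–Glynn estimator H = (1/(m⋆ − k⋆ + 1)) Σ_{k=k⋆}^{m⋆} φ(X_k) + Σ_{k=k⋆+1}^{τ−1} (min(m⋆ − k⋆ + 1, k − k⋆)/(m⋆ − k⋆ + 1)) (φ(X_k) − φ(X̊_k)) is integrable and E[H] = π(φ). That is, averaging the Markov chain between iterations k⋆ and m⋆ with the appropriately weighted bias-correction terms still yields an unbiased estimator of π(φ). -/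
open MeasureTheory ProbabilityTheory Filter Finset
open scoped ENNReal

/-! From `τ` on the two chains agree, so the bias correction is the a.s. finite sum
`∑_{j < τ} w_j (φ(X_j) - φ(X̊_j))`, each term bounded by `2 sup |φ|` and vanishing off `{j < τ}`.
Geometric tails make `∑_j E|w_j (φ(X_j) - φ(X̊_j))|` finite, so expectation and sum commute, and
since `X̊_j ~ X_{j-1}` the `j`-th term has mean `w_j (E φ(X_j) - E φ(X_{j-1}))`. Summing by parts,
the partial sum up to any `n ≥ m⋆` is `E φ(X_n)` minus the mean of the time average, and this
tends to `π(φ)` minus that mean. -/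

section StoppedSum

variable {α E : Type*} [MeasurableSpace α] {μ : Measure α} [NormedAddCommGroup E]
  {F : ℕ → α → E} {τ : α → ℕ}

lemma ae_hasSum_sum_range_of_eventually_zero
    (hzero : ∀ᵐ ω ∂μ, ∀ j, τ ω ≤ j → F j ω = 0) :
    ∀ᵐ ω ∂μ, HasSum (fun j => F j ω) (∑ j ∈ range (τ ω), F j ω) := by
  filter_upwards [hzero] with ω hω
  exact hasSum_sum_of_ne_finset_zero fun j hj => hω j (by simpa using hj)

lemma lintegral_tsum_enorm_ne_top (hF : ∀ j, Integrable (F j) μ)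
    (hsum : Summable fun j => ∫ ω, ‖F j ω‖ ∂μ) :
    ∫⁻ ω, ∑' j, ‖F j ω‖ₑ ∂μ ≠ ∞ := by
  rw [lintegral_tsum fun j => (hF j).aestronglyMeasurable.enorm]
  simp_rw [← ofReal_integral_norm_eq_lintegral_enorm (hF _)]
  rw [← ENNReal.ofReal_tsum_of_nonneg (fun j => integral_nonneg fun _ => norm_nonneg _) hsum]
  exact ENNReal.ofReal_ne_top

lemma integrable_sum_range_of_summable_integral_norm (hF : ∀ j, Integrable (F j) μ)
    (hsum : Summable fun j => ∫ ω, ‖F j ω‖ ∂μ) (hzero : ∀ᵐ ω ∂μ, ∀ j, τ ω ≤ j → F j ω = 0) :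
    Integrable (fun ω => ∑ j ∈ range (τ ω), F j ω) μ := by
  refine ⟨aestronglyMeasurable_of_tendsto_ae atTop
    (fun n => (integrable_finsetSum (range n) fun j _ => hF j).aestronglyMeasurable)
    ((ae_hasSum_sum_range_of_eventually_zero hzero).mono fun _ h => h.tendsto_sum_nat), ?_⟩
  refine lt_of_le_of_lt (lintegral_mono fun ω => ?_)
    (lintegral_tsum_enorm_ne_top hF hsum).lt_top
  exact (enorm_sum_le _ _).trans (ENNReal.sum_le_tsum _)

lemma hasSum_integral_sum_range_of_summable_integral_norm [NormedSpace ℝ E]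
    (hF : ∀ j, Integrable (F j) μ) (hsum : Summable fun j => ∫ ω, ‖F j ω‖ ∂μ)
    (hzero : ∀ᵐ ω ∂μ, ∀ j, τ ω ≤ j → F j ω = 0) :
    HasSum (fun j => ∫ ω, F j ω ∂μ) (∫ ω, ∑ j ∈ range (τ ω), F j ω ∂μ) := by
  rw [integral_congr_ae ((ae_hasSum_sum_range_of_eventually_zero hzero).mono
    fun _ h => h.tsum_eq.symm)]
  exact hasSum_integral_of_summable_integral_norm hF hsum

end StoppedSum

lemma integral_norm_le_mul_measureReal {α E : Type*} [MeasurableSpace α] {μ : Measure α}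
    [IsFiniteMeasure μ] [NormedAddCommGroup E] {f : α → E} {s : Set α} {B : ℝ}
    (hB : ∀ᵐ ω ∂μ, ‖f ω‖ ≤ B) (hs : ∀ᵐ ω ∂μ, ω ∉ s → f ω = 0) :
    ∫ ω, ‖f ω‖ ∂μ ≤ B * μ.real s := by
  have hle : ∀ᵐ ω ∂μ, ‖f ω‖ ≤ (toMeasurable μ s).indicator (fun _ => B) ω := by
    filter_upwards [hB, hs] with ω hωB hωs
    by_cases hω : ω ∈ toMeasurable μ s
    · simpa [hω] using hωB
    · simp [hω, hωs fun h => hω (subset_toMeasurable μ s h)]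
  calc ∫ ω, ‖f ω‖ ∂μ ≤ ∫ ω, (toMeasurable μ s).indicator (fun _ => B) ω ∂μ :=
        integral_mono_of_nonneg (ae_of_all _ fun _ => norm_nonneg _)
          ((integrable_const B).indicator (measurableSet_toMeasurable μ s)) hle
    _ = B * μ.real s := by
        rw [integral_indicator_const _ (measurableSet_toMeasurable μ s), smul_eq_mul, mul_comm,
          measureReal_def, measure_toMeasurable, ← measureReal_def]

-- Summation by parts: `min (m - k + 1) (j - k)` counts the `i ∈ [k, m]` with `i < j`.
lemma sum_range_succ_min_mul_sub (a : ℕ → ℝ) {k m : ℕ} (hkm : k ≤ m) (n : ℕ) :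
    ∑ j ∈ range (n + 1), ((min (m - k + 1) (j - k) : ℕ) : ℝ) * (a j - a (j - 1)) =
      ∑ i ∈ Icc k m, (a (max n i) - a i) := by
  induction n with
  | zero => simp
  | succ n ih =>
    have hstep : ∀ i ∈ Icc k m, a (max (n + 1) i) - a i =
        (a (max n i) - a i) + if i ≤ n then a (n + 1) - a n else 0 := by
      intro i _
      rcases le_or_gt i n with h | h
      · rw [if_pos h, max_eq_left (by omega), max_eq_left h]; ring
      · rw [if_neg (by omega), max_eq_right h, max_eq_right (by omega)]; ring
    have hcount : ((Icc k m).filter (· ≤ n)).card = min (m - k + 1) (n + 1 - k) := by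
      rw [show (Icc k m).filter (· ≤ n) = Icc k (min m n) by
        ext; simp only [mem_filter, mem_Icc]; omega, Nat.card_Icc]
      omega
    rw [sum_range_succ, ih, sum_congr rfl hstep, sum_add_distrib, ← sum_filter, sum_const,
      hcount, nsmul_eq_mul, Nat.add_sub_cancel]

-- `min N (j - k) / N`: truncated subtraction makes it vanish for `j ≤ k`.
noncomputable def correctionWeight (N k j : ℕ) : ℝ := ((min N (j - k) : ℕ) : ℝ) / (N : ℝ)

lemma correctionWeight_of_le {N k j : ℕ} (h : j ≤ k) : correctionWeight N k j = 0 := by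
  simp [correctionWeight, Nat.sub_eq_zero_of_le h]

lemma abs_correctionWeight_le_one (N k j : ℕ) : |correctionWeight N k j| ≤ 1 := by
  rw [correctionWeight, abs_of_nonneg (by positivity)]
  exact div_le_one_of_le₀ (by exact_mod_cast min_le_left _ _) (Nat.cast_nonneg N)

lemma sum_Ico_correctionWeight_mul (f : ℕ → ℝ) (N k n : ℕ) :
    ∑ j ∈ Ico (k + 1) n, correctionWeight N k j * f j =
      ∑ j ∈ range n, correctionWeight N k j * f j :=
  sum_subset (fun j hj => by simp only [mem_Ico, mem_range] at hj ⊢; omega) fun j hj hj' => by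
    rw [correctionWeight_of_le (by simp only [mem_Ico, mem_range] at hj hj'; omega), zero_mul]

lemma tendsto_sum_range_correctionWeight_mul_sub {a : ℕ → ℝ} {L : ℝ} {k m : ℕ} (hkm : k ≤ m)
    (ha : Tendsto a atTop (nhds L)) :
    Tendsto (fun n => ∑ j ∈ range n, correctionWeight (m - k + 1) k j * (a j - a (j - 1)))
      atTop (nhds (L - ((m - k + 1 : ℕ) : ℝ)⁻¹ * ∑ i ∈ Icc k m, a i)) := by
  rw [← tendsto_add_atTop_iff_nat 1]
  refine (ha.sub_const _).congr' ?_
  filter_upwards [eventually_ge_atTop m] with n hn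
  have hmax : ∀ i ∈ Icc k m, a (max n i) - a i = a n - a i := fun i hi => by
    rw [max_eq_left ((mem_Icc.1 hi).2.trans hn)]
  have hN : ((m - k + 1 : ℕ) : ℝ) ≠ 0 := by positivity
  simp_rw [correctionWeight, div_mul_eq_mul_div, ← sum_div]
  rw [sum_range_succ_min_mul_sub a hkm, sum_congr rfl hmax, sum_sub_distrib, sum_const,
    Nat.card_Icc, nsmul_eq_mul, show m + 1 - k = m - k + 1 by omega]
  field_simp

section CoupledChains

variable {Ω S : Type*} [MeasurableSpace Ω] {P : Measure Ω}
  {φ : S → ℝ} {M : ℝ} {X X' : ℕ → Ω → S} {w : ℕ → ℝ}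

lemma integrable_comp_of_abs_le [MeasurableSpace S] [IsFiniteMeasure P] (hφm : Measurable φ)
    (hM : ∀ s, |φ s| ≤ M) {Y : Ω → S} (hY : Measurable Y) :
    Integrable (fun ω => φ (Y ω)) P :=
  .of_bound (hφm.comp hY).aestronglyMeasurable M (ae_of_all _ fun ω => hM (Y ω))

lemma summable_integral_norm_mul_sub [IsFiniteMeasure P] {τ : Ω → ℕ} {K C ρ : ℝ}
    (hM : ∀ s, |φ s| ≤ M) (hw : ∀ j, |w j| ≤ K) (hρ : ρ ∈ Set.Ioo (0 : ℝ) 1)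
    (htail : ∀ k, P {ω | k < τ ω} ≤ ENNReal.ofReal (C * ρ ^ k))
    (hfaithful : ∀ᵐ ω ∂P, ∀ k, τ ω ≤ k → X k ω = X' k ω) :
    Summable fun j => ∫ ω, ‖w j * (φ (X j ω) - φ (X' j ω))‖ ∂P := by
  have hK : 0 ≤ K := (abs_nonneg _).trans (hw 0)
  have hbound : ∀ j ω, ‖w j * (φ (X j ω) - φ (X' j ω))‖ ≤ K * (2 * |M|) := fun j ω => by
    rw [Real.norm_eq_abs, abs_mul]
    refine mul_le_mul (hw j) ?_ (abs_nonneg _) hK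
    linarith [abs_sub (φ (X j ω)) (φ (X' j ω)), hM (X j ω), hM (X' j ω), le_abs_self M]
  have htail' : ∀ j, P.real {ω | j < τ ω} ≤ |C| * ρ ^ j := fun j =>
    ENNReal.toReal_le_of_le_ofReal (mul_nonneg (abs_nonneg C) (pow_nonneg hρ.1.le j))
      ((htail j).trans (ENNReal.ofReal_le_ofReal
        (mul_le_mul_of_nonneg_right (le_abs_self C) (pow_nonneg hρ.1.le j))))
  refine Summable.of_nonneg_of_le (fun _ => integral_nonneg fun _ => norm_nonneg _) (fun j => ?_)
    ((summable_geometric_of_lt_one hρ.1.le hρ.2).mul_left (K * (2 * |M|) * |C|))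
  calc ∫ ω, ‖w j * (φ (X j ω) - φ (X' j ω))‖ ∂P ≤ K * (2 * |M|) * P.real {ω | j < τ ω} := by
        refine integral_norm_le_mul_measureReal (ae_of_all _ (hbound j)) ?_
        filter_upwards [hfaithful] with ω hω hj
        rw [hω j (not_lt.1 hj), sub_self, mul_zero]
    _ ≤ K * (2 * |M|) * |C| * ρ ^ j := by rw [mul_assoc _ |C|]; gcongr; exact htail' j

lemma integral_mul_sub_eq [MeasurableSpace S] [IsFiniteMeasure P] (hφm : Measurable φ)
    (hM : ∀ s, |φ s| ≤ M) (hXm : ∀ k, Measurable (X k)) (hX'm : ∀ k, Measurable (X' k))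
    (hident : ∀ k, 1 ≤ k → IdentDistrib (X' k) (X (k - 1)) P P) (hw0 : w 0 = 0) (j : ℕ) :
    ∫ ω, w j * (φ (X j ω) - φ (X' j ω)) ∂P =
      w j * (∫ ω, φ (X j ω) ∂P - ∫ ω, φ (X (j - 1) ω) ∂P) := by
  rcases Nat.eq_zero_or_pos j with rfl | hj
  · simp [hw0]
  rw [integral_const_mul, integral_sub (integrable_comp_of_abs_le hφm hM (hXm j))
    (integrable_comp_of_abs_le hφm hM (hX'm j))]
  congr 2
  exact ((hident j hj).comp hφm).integral_eq

lemma integrable_and_hasSum_integral_correction [MeasurableSpace S] [IsFiniteMeasure P]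
    {τ : Ω → ℕ} {K C ρ : ℝ} (hφm : Measurable φ) (hM : ∀ s, |φ s| ≤ M)
    (hXm : ∀ k, Measurable (X k)) (hX'm : ∀ k, Measurable (X' k))
    (hident : ∀ k, 1 ≤ k → IdentDistrib (X' k) (X (k - 1)) P P)
    (hw0 : w 0 = 0) (hw : ∀ j, |w j| ≤ K) (hρ : ρ ∈ Set.Ioo (0 : ℝ) 1)
    (htail : ∀ k, P {ω | k < τ ω} ≤ ENNReal.ofReal (C * ρ ^ k))
    (hfaithful : ∀ᵐ ω ∂P, ∀ k, τ ω ≤ k → X k ω = X' k ω) :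
    Integrable (fun ω => ∑ j ∈ range (τ ω), w j * (φ (X j ω) - φ (X' j ω))) P ∧
      HasSum (fun j => w j * (∫ ω, φ (X j ω) ∂P - ∫ ω, φ (X (j - 1) ω) ∂P))
        (∫ ω, ∑ j ∈ range (τ ω), w j * (φ (X j ω) - φ (X' j ω)) ∂P) := by
  have hF : ∀ j, Integrable (fun ω => w j * (φ (X j ω) - φ (X' j ω))) P := fun j =>
    ((integrable_comp_of_abs_le hφm hM (hXm j)).sub
      (integrable_comp_of_abs_le hφm hM (hX'm j))).const_mul _
  have hsum := summable_integral_norm_mul_sub hM hw hρ htail hfaithful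
  have hzero : ∀ᵐ ω ∂P, ∀ j, τ ω ≤ j → w j * (φ (X j ω) - φ (X' j ω)) = 0 := by
    filter_upwards [hfaithful] with ω hω j hj
    rw [hω j hj, sub_self, mul_zero]
  refine ⟨integrable_sum_range_of_summable_integral_norm hF hsum hzero, ?_⟩
  simpa only [integral_mul_sub_eq hφm hM hXm hX'm hident hw0] using
    hasSum_integral_sum_range_of_summable_integral_norm hF hsum hzero

end CoupledChains

theorem time_averaged_rhee_glynn_estimator_unbiased_general
    {Ω : Type*} [MeasurableSpace Ω] (P : Measure Ω) [IsProbabilityMeasure P]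
    {S : Type*} [MeasurableSpace S]
    (π : Measure S)
    (φ : S → ℝ) (hφm : Measurable φ) (hφb : ∃ C, ∀ s, |φ s| ≤ C)
    (X X' : ℕ → Ω → S)
    (hXm : ∀ k, Measurable (X k)) (hX'm : ∀ k, Measurable (X' k))
    (hident : ∀ k, 1 ≤ k → IdentDistrib (X' k) (X (k - 1)) P P)
    (hconv : Tendsto (fun k => ∫ ω, φ (X k ω) ∂P) atTop (nhds (∫ s, φ s ∂π)))
    (τ : Ω → ℕ)
    (C ρ : ℝ) (hρ : ρ ∈ Set.Ioo (0 : ℝ) 1)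
    (htail : ∀ k, P {ω | k < τ ω} ≤ ENNReal.ofReal (C * ρ ^ k))
    (hfaithful : ∀ᵐ ω ∂P, ∀ k, τ ω ≤ k → X k ω = X' k ω)
    (kstar mstar : ℕ) (hkm : kstar < mstar) :
    Integrable (fun ω =>
        ((mstar - kstar + 1 : ℕ) : ℝ)⁻¹ * ∑ k ∈ Finset.Icc kstar mstar, φ (X k ω) +
        ∑ k ∈ Finset.Ico (kstar + 1) (τ ω),
          (((min (mstar - kstar + 1) (k - kstar) : ℕ) : ℝ) /
            ((mstar - kstar + 1 : ℕ) : ℝ)) * (φ (X k ω) - φ (X' k ω))) P ∧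
      ∫ ω, (((mstar - kstar + 1 : ℕ) : ℝ)⁻¹ *
          ∑ k ∈ Finset.Icc kstar mstar, φ (X k ω) +
        ∑ k ∈ Finset.Ico (kstar + 1) (τ ω),
          (((min (mstar - kstar + 1) (k - kstar) : ℕ) : ℝ) /
            ((mstar - kstar + 1 : ℕ) : ℝ)) * (φ (X k ω) - φ (X' k ω))) ∂P =
        ∫ s, φ s ∂π := by
  obtain ⟨M, hM⟩ := hφb
  obtain ⟨hcorr, hhasSum⟩ := integrable_and_hasSum_integral_correction hφm hM hXm hX'm hident
    (correctionWeight_of_le (Nat.zero_le kstar)) (abs_correctionWeight_le_one (mstar - kstar + 1)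
    kstar) hρ htail hfaithful
  have hlim := tendsto_nhds_unique hhasSum.tendsto_sum_nat
    (tendsto_sum_range_correctionWeight_mul_sub hkm.le hconv)
  have hA : ∀ k ∈ Icc kstar mstar, Integrable (fun ω => φ (X k ω)) P := fun k _ =>
    integrable_comp_of_abs_le hφm hM (hXm k)
  change Integrable (fun ω => _ + ∑ j ∈ Ico (kstar + 1) (τ ω),
      correctionWeight (mstar - kstar + 1) kstar j * _) P ∧
    ∫ ω, (_ + ∑ j ∈ Ico (kstar + 1) (τ ω), correctionWeight (mstar - kstar + 1) kstar j * _) ∂P = _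
  simp_rw [sum_Ico_correctionWeight_mul]
  refine ⟨((integrable_finsetSum _ hA).const_mul _).add hcorr, ?_⟩
  rw [integral_add ((integrable_finsetSum _ hA).const_mul _) hcorr, hlim, integral_const_mul,
    integral_finsetSum _ hA]
  ring

/-- Unbiasedness of the time-averaged Rhee–Glynn coupled-chain estimator:
for `1 ≤ k⋆ < m⋆`, the estimator
`H = (m⋆−k⋆+1)⁻¹ Σ_{k=k⋆}^{m⋆} φ(X_k)
   + Σ_{k=k⋆+1}^{τ−1} (min(m⋆−k⋆+1, k−k⋆)/(m⋆−k⋆+1)) (φ(X_k) − φ(X̊_k))`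
is integrable with expectation `π(φ)`. -/
theorem time_averaged_rhee_glynn_estimator_unbiased
    {Ω : Type*} [MeasurableSpace Ω] (P : Measure Ω) [IsProbabilityMeasure P]
    {S : Type*} [MeasurableSpace S]
    (π : Measure S) [IsProbabilityMeasure π]
    (φ : S → ℝ) (hφm : Measurable φ) (hφb : ∃ C, ∀ s, |φ s| ≤ C)
    (X X' : ℕ → Ω → S)
    (hXm : ∀ k, Measurable (X k)) (hX'm : ∀ k, Measurable (X' k))
    (hident : ∀ k, 1 ≤ k → IdentDistrib (X' k) (X (k - 1)) P P)
    (hconv : Tendsto (fun k => ∫ ω, φ (X k ω) ∂P) atTop (nhds (∫ s, φ s ∂π)))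
    (τ : Ω → ℕ) (hτ : ∀ ω, τ ω = sInf {k | 1 ≤ k ∧ X k ω = X' k ω})
    (C ρ : ℝ) (hρ : ρ ∈ Set.Ioo (0 : ℝ) 1)
    (htail : ∀ k, P {ω | k < τ ω} ≤ ENNReal.ofReal (C * ρ ^ k))
    (hfaithful : ∀ᵐ ω ∂P, ∀ k, τ ω ≤ k → X k ω = X' k ω)
    (kstar mstar : ℕ) (hk : 1 ≤ kstar) (hkm : kstar < mstar) :
    Integrable (fun ω =>
        ((mstar - kstar + 1 : ℕ) : ℝ)⁻¹ * ∑ k ∈ Finset.Icc kstar mstar, φ (X k ω) +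
        ∑ k ∈ Finset.Ico (kstar + 1) (τ ω),
          (((min (mstar - kstar + 1) (k - kstar) : ℕ) : ℝ) /
            ((mstar - kstar + 1 : ℕ) : ℝ)) * (φ (X k ω) - φ (X' k ω))) P ∧
      ∫ ω, (((mstar - kstar + 1 : ℕ) : ℝ)⁻¹ *
          ∑ k ∈ Finset.Icc kstar mstar, φ (X k ω) +
        ∑ k ∈ Finset.Ico (kstar + 1) (τ ω),
          (((min (mstar - kstar + 1) (k - kstar) : ℕ) : ℝ) /
            ((mstar - kstar + 1 : ℕ) : ℝ)) * (φ (X k ω) - φ (X' k ω))) ∂P =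
        ∫ s, φ s ∂π :=
  time_averaged_rhee_glynn_estimator_unbiased_general P π φ hφm hφb X X' hXm hX'm hident hconv τ C ρ
    hρ htail hfaithful kstar mstar hkm
end

section
/- Let p⋆(l) = c^{−1} 2^{−l/2} (l + 1) (log₂(l + 2))² with normalizing constant c = Σ_{l≥0} 2^{−l/2} (l + 1) (log₂(l + 2))². If (v_l)_{l∈ℕ} is a nonnegative sequence with v_l ≤ C 2^{−l} for all l and some constant C < ∞, then Σ_{l≥0} v_l / p⋆(l) < ∞, while Σ_{l≥0} 2^{l} p⋆(l) = ∞. In particular, if the increment variances satisfy E[‖Ψ_l‖₂²] ≤ C Δ_l, the single-term estimator with level distribution p⋆ has finite variance, but its expected computational cost E[Δ_L^{−1}] = E[2^L] is infinite. -/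
lemma aux_rpow_eq (l : ℕ) :
    (2 : ℝ) ^ (-(l : ℝ) / 2) = ((2 : ℝ) ^ (-(1 : ℝ) / 2)) ^ l := by
  rw [← Real.rpow_natCast ((2 : ℝ) ^ (-(1 : ℝ) / 2)) l,
    ← Real.rpow_mul (by norm_num)]
  ring_nf

lemma aux_r_lt_one : (2 : ℝ) ^ (-(1 : ℝ) / 2) < 1 := by
  apply Real.rpow_lt_one_of_one_lt_of_neg (by norm_num) (by norm_num)

lemma aux_r_pos : (0 : ℝ) < (2 : ℝ) ^ (-(1 : ℝ) / 2) :=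
  Real.rpow_pos_of_pos (by norm_num) _

lemma aux_logb_one_le (l : ℕ) : 1 ≤ Real.logb 2 ((l : ℝ) + 2) := by
  rw [← Real.logb_self_eq_one (b := 2) (by norm_num)]
  rw [Real.logb_le_logb (by norm_num) (by norm_num) (by positivity)]
  have : (0 : ℝ) ≤ (l : ℝ) := Nat.cast_nonneg l
  linarith

lemma aux_logb_le (l : ℕ) : Real.logb 2 ((l : ℝ) + 2) ≤ 2 * ((l : ℝ) + 2) := by
  have hl : (0 : ℝ) ≤ (l : ℝ) := Nat.cast_nonneg l
  have hlog : Real.log ((l : ℝ) + 2) ≤ (l : ℝ) + 2 := by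
    have := Real.log_le_sub_one_of_pos (x := (l : ℝ) + 2) (by linarith)
    linarith
  have h2 : (1 / 2 : ℝ) < Real.log 2 := by
    have := Real.log_two_gt_d9; linarith
  have hlognn : 0 ≤ Real.log ((l : ℝ) + 2) :=
    Real.log_nonneg (by linarith)
  rw [Real.logb, div_le_iff₀ (by linarith)]
  nlinarith

/-- The series defining `c` is summable. -/
lemma aux_summable_c :
    Summable (fun l : ℕ =>
      (2 : ℝ) ^ (-(l : ℝ) / 2) * ((l : ℝ) + 1) * Real.logb 2 ((l : ℝ) + 2) ^ 2) := by
  set r : ℝ := (2 : ℝ) ^ (-(1 : ℝ) / 2) with hr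
  have hr0 : 0 ≤ r := aux_r_pos.le
  have hr1 : r < 1 := aux_r_lt_one
  have hsum : Summable (fun n : ℕ => (256 : ℝ) * ((n : ℝ) ^ 3 * r ^ n + r ^ n)) := by
    apply Summable.mul_left
    exact (summable_pow_mul_geometric_of_norm_lt_one 3
      (by rwa [Real.norm_eq_abs, abs_of_nonneg hr0])).add
      (summable_geometric_of_lt_one hr0 hr1)
  apply Summable.of_nonneg_of_le _ _ hsum
  · intro l
    have h1 := aux_logb_one_le l
    have h2 : (0 : ℝ) < (2 : ℝ) ^ (-(l : ℝ) / 2) := Real.rpow_pos_of_pos (by norm_num) _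
    have hl : (0 : ℝ) ≤ (l : ℝ) := Nat.cast_nonneg l
    positivity
  · intro l
    have hl : (0 : ℝ) ≤ (l : ℝ) := Nat.cast_nonneg l
    have h1 := aux_logb_one_le l
    have h2 := aux_logb_le l
    have hrl : (2 : ℝ) ^ (-(l : ℝ) / 2) = r ^ l := aux_rpow_eq l
    have hrlpos : (0 : ℝ) < r ^ l := pow_pos aux_r_pos l
    rw [hrl]
    have hpoly : ((l : ℝ) + 1) * Real.logb 2 ((l : ℝ) + 2) ^ 2 ≤
        256 * ((l : ℝ) ^ 3 + 1) := by
      have hb : Real.logb 2 ((l : ℝ) + 2) ^ 2 ≤ (2 * ((l : ℝ) + 2)) ^ 2 := by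
        apply pow_le_pow_left₀ (by linarith) h2
      have hb' : ((l : ℝ) + 1) * Real.logb 2 ((l : ℝ) + 2) ^ 2 ≤
          ((l : ℝ) + 1) * (2 * ((l : ℝ) + 2)) ^ 2 :=
        mul_le_mul_of_nonneg_left hb (by linarith)
      nlinarith [mul_nonneg hl hl, mul_nonneg (mul_nonneg hl hl) hl,
        mul_le_mul_of_nonneg_left (show (l:ℝ) ≤ (l:ℝ)^3 + 1 by nlinarith [sq_nonneg ((l:ℝ)-1), mul_nonneg hl hl]) (show (0:ℝ) ≤ 32 by norm_num)]
    calc r ^ l * ((l : ℝ) + 1) * Real.logb 2 ((l : ℝ) + 2) ^ 2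
        = (((l : ℝ) + 1) * Real.logb 2 ((l : ℝ) + 2) ^ 2) * r ^ l := by ring
      _ ≤ (256 * ((l : ℝ) ^ 3 + 1)) * r ^ l := by
          apply mul_le_mul_of_nonneg_right hpoly hrlpos.le
      _ = 256 * ((l : ℝ) ^ 3 * r ^ l + r ^ l) := by ring

/-- With the level distribution `p⋆(l) = c⁻¹ 2^{−l/2} (l+1) (log₂(l+2))²`:
if the increment second moments satisfy `v_l ≤ C 2^{−l}` then
`Σ_l v_l / p⋆(l) < ∞` (finite variance of the single-term estimator), while
`Σ_l 2^l p⋆(l) = ∞` (the expected computational cost `E[2^L]` is infinite). -/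
theorem empirical_distribution_finite_variance_infinite_cost
    (c : ℝ)
    (hc : c = ∑' l : ℕ,
      (2 : ℝ) ^ (-(l : ℝ) / 2) * ((l : ℝ) + 1) * Real.logb 2 ((l : ℝ) + 2) ^ 2)
    (pstar : ℕ → ℝ)
    (hp : ∀ l : ℕ, pstar l =
      c⁻¹ * ((2 : ℝ) ^ (-(l : ℝ) / 2) * ((l : ℝ) + 1) * Real.logb 2 ((l : ℝ) + 2) ^ 2))
    (v : ℕ → ℝ) (hv0 : ∀ l, 0 ≤ v l)
    (C : ℝ) (hvC : ∀ l : ℕ, v l ≤ C * (2 : ℝ) ^ (-(l : ℝ))) :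
    Summable (fun l => v l / pstar l) ∧
      ¬ Summable (fun l : ℕ => (2 : ℝ) ^ (l : ℝ) * pstar l) := by
  have hterm_nonneg : ∀ l : ℕ, 0 ≤
      (2 : ℝ) ^ (-(l : ℝ) / 2) * ((l : ℝ) + 1) * Real.logb 2 ((l : ℝ) + 2) ^ 2 := by
    intro l
    have h1 := aux_logb_one_le l
    have h2 : (0 : ℝ) < (2 : ℝ) ^ (-(l : ℝ) / 2) := Real.rpow_pos_of_pos (by norm_num) _
    have hl : (0 : ℝ) ≤ (l : ℝ) := Nat.cast_nonneg l
    positivity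
  have hcpos : 0 < c := by
    rw [hc]
    apply Summable.tsum_pos aux_summable_c hterm_nonneg 0
    simp [Real.logb_self_eq_one]
  -- lower bound on pstar
  have hpstar_lb : ∀ l : ℕ, c⁻¹ * (2 : ℝ) ^ (-(l : ℝ) / 2) ≤ pstar l := by
    intro l
    rw [hp l]
    have h1 := aux_logb_one_le l
    have h2 : (0 : ℝ) < (2 : ℝ) ^ (-(l : ℝ) / 2) := Real.rpow_pos_of_pos (by norm_num) _
    have hl : (0 : ℝ) ≤ (l : ℝ) := Nat.cast_nonneg l
    have hci : 0 < c⁻¹ := inv_pos.mpr hcpos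
    have : (2 : ℝ) ^ (-(l : ℝ) / 2) * 1 ≤
        (2 : ℝ) ^ (-(l : ℝ) / 2) * (((l : ℝ) + 1) * Real.logb 2 ((l : ℝ) + 2) ^ 2) := by
      apply mul_le_mul_of_nonneg_left _ h2.le
      nlinarith
    nlinarith
  have hpstar_pos : ∀ l : ℕ, 0 < pstar l := by
    intro l
    have h2 : (0 : ℝ) < (2 : ℝ) ^ (-(l : ℝ) / 2) := Real.rpow_pos_of_pos (by norm_num) _
    have := hpstar_lb l
    have hci : 0 < c⁻¹ := inv_pos.mpr hcpos
    nlinarith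
  have hC : 0 ≤ C := by
    have := hvC 0
    have := hv0 0
    simp at *
    linarith
  constructor
  · -- finite variance
    set r : ℝ := (2 : ℝ) ^ (-(1 : ℝ) / 2) with hr
    have hsum : Summable (fun l : ℕ => C * c * r ^ l) :=
      (summable_geometric_of_lt_one aux_r_pos.le aux_r_lt_one).mul_left _
    apply Summable.of_nonneg_of_le _ _ hsum
    · intro l
      exact div_nonneg (hv0 l) (hpstar_pos l).le
    · intro l
      have hinv : (pstar l)⁻¹ ≤ c * (2 : ℝ) ^ ((l : ℝ) / 2) := by
        have h2 : (0 : ℝ) < (2 : ℝ) ^ (-(l : ℝ) / 2) := Real.rpow_pos_of_pos (by norm_num) _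
        have hlb := hpstar_lb l
        have hci : 0 < c⁻¹ := inv_pos.mpr hcpos
        have hpos : 0 < c⁻¹ * (2 : ℝ) ^ (-(l : ℝ) / 2) := by positivity
        have := inv_anti₀ hpos hlb
        rwa [mul_inv, inv_inv, ← Real.rpow_neg (by norm_num : (0:ℝ) ≤ 2), neg_div,
          neg_neg] at this
      have hmul : v l / pstar l ≤ C * (2 : ℝ) ^ (-(l : ℝ)) * (c * (2 : ℝ) ^ ((l : ℝ) / 2)) := by
        rw [div_eq_mul_inv]
        have hvl := hvC l
        have hpinv : 0 < (pstar l)⁻¹ := inv_pos.mpr (hpstar_pos l)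
        have h1 : v l * (pstar l)⁻¹ ≤ C * (2 : ℝ) ^ (-(l : ℝ)) * (pstar l)⁻¹ :=
          mul_le_mul_of_nonneg_right hvl hpinv.le
        have h2pow : (0 : ℝ) < (2 : ℝ) ^ (-(l : ℝ)) := Real.rpow_pos_of_pos (by norm_num) _
        have h2 : C * (2 : ℝ) ^ (-(l : ℝ)) * (pstar l)⁻¹ ≤
            C * (2 : ℝ) ^ (-(l : ℝ)) * (c * (2 : ℝ) ^ ((l : ℝ) / 2)) :=
          mul_le_mul_of_nonneg_left hinv (by positivity)
        linarith
      calc v l / pstar l ≤ C * (2 : ℝ) ^ (-(l : ℝ)) * (c * (2 : ℝ) ^ ((l : ℝ) / 2)) := hmul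
        _ = C * c * (2 : ℝ) ^ (-(l : ℝ) / 2) := by
            rw [show C * (2 : ℝ) ^ (-(l : ℝ)) * (c * (2 : ℝ) ^ ((l : ℝ) / 2)) =
              C * c * ((2 : ℝ) ^ (-(l : ℝ)) * (2 : ℝ) ^ ((l : ℝ) / 2)) by ring,
              ← Real.rpow_add (by norm_num : (0:ℝ) < 2)]
            ring_nf
        _ = C * c * r ^ l := by rw [aux_rpow_eq l]
  · -- infinite cost
    intro hsum
    have htend := hsum.tendsto_atTop_zero
    have hci : 0 < c⁻¹ := inv_pos.mpr hcpos
    have hlb : ∀ l : ℕ, c⁻¹ ≤ (2 : ℝ) ^ (l : ℝ) * pstar l := by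
      intro l
      have hpow : (0 : ℝ) < (2 : ℝ) ^ (l : ℝ) := Real.rpow_pos_of_pos (by norm_num) _
      have h1 : (2 : ℝ) ^ (l : ℝ) * (c⁻¹ * (2 : ℝ) ^ (-(l : ℝ) / 2)) ≤
          (2 : ℝ) ^ (l : ℝ) * pstar l :=
        mul_le_mul_of_nonneg_left (hpstar_lb l) hpow.le
      have h2 : (2 : ℝ) ^ (l : ℝ) * (c⁻¹ * (2 : ℝ) ^ (-(l : ℝ) / 2)) =
          c⁻¹ * (2 : ℝ) ^ ((l : ℝ) / 2) := by
        rw [show (2 : ℝ) ^ (l : ℝ) * (c⁻¹ * (2 : ℝ) ^ (-(l : ℝ) / 2)) =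
          c⁻¹ * ((2 : ℝ) ^ (l : ℝ) * (2 : ℝ) ^ (-(l : ℝ) / 2)) by ring,
          ← Real.rpow_add (by norm_num : (0:ℝ) < 2)]
        ring_nf
      have h3 : (1 : ℝ) ≤ (2 : ℝ) ^ ((l : ℝ) / 2) :=
        Real.one_le_rpow (by norm_num) (by positivity)
      nlinarith
    have := (htend.eventually (eventually_lt_nhds hci)).exists
    obtain ⟨l, hl⟩ := this
    exact absurd (hlb l) (not_le.mpr hl)
end
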